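/- arXiv:1210.3609 — 2 statements merged into one kernel-verified Lean document; each statement's English description precedes it below -/
import Mathlib

section
/- For every n ≥ 0, the finite-horizon value function V^n is convex in each coordinate separately: for all c ∈ [0,1], all p, p' ∈ [0,1] and all p1, p2 ∈ [0,1], V^n(c·p + (1−c)·p', p2) ≤ c·V^n(p, p2) + (1−c)·V^n(p', p2) and V^n(p1, c·p + (1−c)·p') ≤ c·V^n(p1, p) + (1−c)·V^n(p1, p'). -/
open Set

noncomputable section

/-- Belief update for an unobserved channel: `T p = λ0 + (λ1 - λ0) p`. -/
def Tr (l0 l1 p : ℝ) : ℝ := l0 + (l1 - l0) * p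

/-- The four power allocation actions. -/
inductive PAct
  | Bb  -- balanced
  | B1  -- bet on channel 1
  | B2  -- bet on channel 2
  | Br  -- conservative

/-- Action-value functional `W_a` computed from a function `W`. -/
def Q (l0 l1 β Rl Rh Cl Ch : ℝ) (W : ℝ → ℝ → ℝ) : PAct → ℝ → ℝ → ℝ
  | PAct.Bb => fun p1 p2 =>
      (p1 + p2) * (Rl + Cl) - 2 * Cl +
        β * ((1 - p1) * (1 - p2) * W l0 l0 + p1 * p2 * W l1 l1 +
             p1 * (1 - p2) * W l1 l0 + (1 - p1) * p2 * W l0 l1)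
  | PAct.B1 => fun p1 p2 =>
      (Rh + Ch) * p1 - Ch +
        β * (p1 * W l1 (Tr l0 l1 p2) + (1 - p1) * W l0 (Tr l0 l1 p2))
  | PAct.B2 => fun p1 p2 =>
      (Rh + Ch) * p2 - Ch +
        β * (p2 * W (Tr l0 l1 p1) l1 + (1 - p2) * W (Tr l0 l1 p1) l0)
  | PAct.Br => fun p1 p2 => β * W (Tr l0 l1 p1) (Tr l0 l1 p2)

/-- The Bellman operator `L W = max over the four actions of W_a`. -/
def Bop (l0 l1 β Rl Rh Cl Ch : ℝ) (W : ℝ → ℝ → ℝ) (p1 p2 : ℝ) : ℝ :=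
  max (max (Q l0 l1 β Rl Rh Cl Ch W PAct.Bb p1 p2)
           (Q l0 l1 β Rl Rh Cl Ch W PAct.B1 p1 p2))
      (max (Q l0 l1 β Rl Rh Cl Ch W PAct.B2 p1 p2)
           (Q l0 l1 β Rl Rh Cl Ch W PAct.Br p1 p2))

/-- Boundedness on the belief space `[0,1] × [0,1]`. -/
def BddOnSq (W : ℝ → ℝ → ℝ) : Prop :=
  ∃ M : ℝ, ∀ p1 ∈ Icc (0:ℝ) 1, ∀ p2 ∈ Icc (0:ℝ) 1, |W p1 p2| ≤ M

/-- Being a fixed point of the Bellman operator on the belief space. -/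
def IsFix (l0 l1 β Rl Rh Cl Ch : ℝ) (V : ℝ → ℝ → ℝ) : Prop :=
  ∀ p1 ∈ Icc (0:ℝ) 1, ∀ p2 ∈ Icc (0:ℝ) 1,
    V p1 p2 = Bop l0 l1 β Rl Rh Cl Ch V p1 p2

/-- Finite-horizon value iteration: `V⁰ ≡ 0`, `V^{n+1} = L V^n`. -/
def Vit (l0 l1 β Rl Rh Cl Ch : ℝ) : ℕ → ℝ → ℝ → ℝ
  | 0 => fun _ _ => 0
  | n + 1 => Bop l0 l1 β Rl Rh Cl Ch (Vit l0 l1 β Rl Rh Cl Ch n)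


/-!
Once `V^n` is convex in `p1` (for each `p2 ∈ [0,1]`), so is every action value of `V^n`: the
values of `B_b` and `B_1` are affine in `p1`, while those of `B_2` and `B_r` are nonnegative
combinations of `V^n` composed with the affine update `T`. A maximum of convex functions is
convex, so convexity in `p1` propagates to `V^{n+1} = L V^n`. Convexity in `p2` then comes for
free: swapping the coordinates exchanges `B_1` and `B_2` and fixes the other two actions, so
every `V^n` is symmetric.
-/

lemma Tr_eq_lineMap (l0 l1 : ℝ) : Tr l0 l1 = AffineMap.lineMap l0 l1 := by
  funext p
  rw [AffineMap.lineMap_apply_ring', Tr]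
  ring

lemma Tr_mem_Icc {l0 l1 p : ℝ} (hl0 : l0 ∈ Icc (0:ℝ) 1) (hl1 : l1 ∈ Icc (0:ℝ) 1)
    (hp : p ∈ Icc (0:ℝ) 1) : Tr l0 l1 p ∈ Icc (0:ℝ) 1 := by
  rw [Tr_eq_lineMap]
  exact (convex_Icc 0 1).lineMap_mem hl0 hl1 hp

lemma ConvexOn.comp_Tr {f : ℝ → ℝ} (hf : ConvexOn ℝ univ f) (l0 l1 : ℝ) :
    ConvexOn ℝ univ fun x => f (Tr l0 l1 x) := by
  rw [Tr_eq_lineMap]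
  exact hf.comp_affineMap _

lemma convexOn_univ_affine (a b : ℝ) : ConvexOn ℝ univ fun x : ℝ => a * x + b :=
  ((LinearMap.mulLeft ℝ a).convexOn convex_univ).add_const b

section

variable {l0 l1 β : ℝ} (Rl Rh Cl Ch : ℝ)

lemma Bop_swap (W : ℝ → ℝ → ℝ) (p1 p2 : ℝ) :
    Bop l0 l1 β Rl Rh Cl Ch (fun x y => W y x) p1 p2 = Bop l0 l1 β Rl Rh Cl Ch W p2 p1 := by
  simp only [Bop, Q]
  rw [max_max_max_comm]
  congr 2
  ring

lemma Vit_comm (n : ℕ) (p1 p2 : ℝ) :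
    Vit l0 l1 β Rl Rh Cl Ch n p1 p2 = Vit l0 l1 β Rl Rh Cl Ch n p2 p1 := by
  induction n generalizing p1 p2 with
  | zero => rfl
  | succ n ih =>
    have hsymm : (fun x y => Vit l0 l1 β Rl Rh Cl Ch n y x) = Vit l0 l1 β Rl Rh Cl Ch n :=
      funext₂ fun x y => ih y x
    rw [Vit, ← Bop_swap, hsymm]

variable (hl0 : l0 ∈ Icc (0:ℝ) 1) (hl1 : l1 ∈ Icc (0:ℝ) 1) (hβ : 0 ≤ β)
include hl0 hl1 hβ

lemma convexOn_Q_fst {W : ℝ → ℝ → ℝ}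
    (hW : ∀ y ∈ Icc (0:ℝ) 1, ConvexOn ℝ univ fun x => W x y) (a : PAct)
    {y : ℝ} (hy : y ∈ Icc (0:ℝ) 1) :
    ConvexOn ℝ univ fun x => Q l0 l1 β Rl Rh Cl Ch W a x y := by
  cases a with
  | Bb =>
    refine (convexOn_univ_affine (Rl + Cl + β * ((1 - y) * (W l1 l0 - W l0 l0)
      + y * (W l1 l1 - W l0 l1))) ((y - 2) * Cl + y * Rl + β * ((1 - y) * W l0 l0
      + y * W l0 l1))).congr fun x _ => ?_
    simp only [Q]
    ring
  | B1 =>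
    refine (convexOn_univ_affine (Rh + Ch + β * (W l1 (Tr l0 l1 y) - W l0 (Tr l0 l1 y)))
      (β * W l0 (Tr l0 l1 y) - Ch)).congr fun x _ => ?_
    simp only [Q]
    ring
  | B2 =>
    have hmix := (((hW l1 hl1).comp_Tr l0 l1).smul hy.1).add
      (((hW l0 hl0).comp_Tr l0 l1).smul (sub_nonneg.2 hy.2))
    refine ((hmix.smul hβ).add_const ((Rh + Ch) * y - Ch)).congr fun x _ => ?_
    simp only [Q, Pi.add_apply, smul_eq_mul]
    ring
  | Br => exact ((hW _ (Tr_mem_Icc hl0 hl1 hy)).comp_Tr l0 l1).smul hβ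

lemma convexOn_Vit_fst (n : ℕ) {y : ℝ} (hy : y ∈ Icc (0:ℝ) 1) :
    ConvexOn ℝ univ fun x => Vit l0 l1 β Rl Rh Cl Ch n x y := by
  induction n generalizing y with
  | zero => exact convexOn_const 0 convex_univ
  | succ n ih =>
    have hQ := fun a => convexOn_Q_fst Rl Rh Cl Ch hl0 hl1 hβ (fun _ => ih) a hy
    exact ((hQ .Bb).sup (hQ .B1)).sup ((hQ .B2).sup (hQ .Br))

end

theorem finite_horizon_convex_general
    (l0 l1 β Rl Rh Cl Ch : ℝ)
    (hl0 : l0 ∈ Icc (0:ℝ) 1) (hl1 : l1 ∈ Icc (0:ℝ) 1)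
    (hβ0 : 0 ≤ β)
    (n : ℕ) (c : ℝ) (hc : c ∈ Icc (0:ℝ) 1)
    (p : ℝ) (p' : ℝ)
    (p1 : ℝ) (hp1 : p1 ∈ Icc (0:ℝ) 1) (p2 : ℝ) (hp2 : p2 ∈ Icc (0:ℝ) 1) :
    Vit l0 l1 β Rl Rh Cl Ch n (c * p + (1 - c) * p') p2 ≤
      c * Vit l0 l1 β Rl Rh Cl Ch n p p2 + (1 - c) * Vit l0 l1 β Rl Rh Cl Ch n p' p2 ∧
    Vit l0 l1 β Rl Rh Cl Ch n p1 (c * p + (1 - c) * p') ≤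
      c * Vit l0 l1 β Rl Rh Cl Ch n p1 p + (1 - c) * Vit l0 l1 β Rl Rh Cl Ch n p1 p' := by
  have hfst : ∀ y ∈ Icc (0:ℝ) 1, Vit l0 l1 β Rl Rh Cl Ch n (c * p + (1 - c) * p') y ≤
      c * Vit l0 l1 β Rl Rh Cl Ch n p y + (1 - c) * Vit l0 l1 β Rl Rh Cl Ch n p' y :=
    fun y hy => (convexOn_Vit_fst Rl Rh Cl Ch hl0 hl1 hβ0 n hy).2 (mem_univ p) (mem_univ p')
      hc.1 (sub_nonneg.2 hc.2) (add_sub_cancel c 1)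
  refine ⟨hfst p2 hp2, ?_⟩
  simpa only [Vit_comm _ _ _ _ n p1] using hfst p1 hp1

/-- Each finite-horizon value function is convex in each coordinate separately. -/
theorem finite_horizon_convex
    (l0 l1 β Rl Rh Cl Ch : ℝ)
    (hl0 : l0 ∈ Icc (0:ℝ) 1) (hl1 : l1 ∈ Icc (0:ℝ) 1) (hl01 : l0 < l1)
    (hβ0 : 0 ≤ β) (hβ1 : β < 1)
    (hRl : 0 < Rl) (hRh : 0 < Rh) (hCl : 0 < Cl) (hCh : 0 < Ch)
    (hRlh : Rl < Rh) (hRh2 : Rh < 2 * Rl)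
    (hClh : Cl < Ch) (hCh2 : Ch < 2 * Cl)
    (hRhCh : Ch < Rh) (hRlCl : Cl < Rl)
    (n : ℕ) (c : ℝ) (hc : c ∈ Icc (0:ℝ) 1)
    (p : ℝ) (hp : p ∈ Icc (0:ℝ) 1) (p' : ℝ) (hp' : p' ∈ Icc (0:ℝ) 1)
    (p1 : ℝ) (hp1 : p1 ∈ Icc (0:ℝ) 1) (p2 : ℝ) (hp2 : p2 ∈ Icc (0:ℝ) 1) :
    Vit l0 l1 β Rl Rh Cl Ch n (c * p + (1 - c) * p') p2 ≤
      c * Vit l0 l1 β Rl Rh Cl Ch n p p2 + (1 - c) * Vit l0 l1 β Rl Rh Cl Ch n p' p2 ∧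
    Vit l0 l1 β Rl Rh Cl Ch n p1 (c * p + (1 - c) * p') ≤
      c * Vit l0 l1 β Rl Rh Cl Ch n p1 p + (1 - c) * Vit l0 l1 β Rl Rh Cl Ch n p1 p' :=
  finite_horizon_convex_general l0 l1 β Rl Rh Cl Ch hl0 hl1 hβ0 n c hc p p' p1 hp1 p2 hp2
end
end

section
/- The four corners of the belief space belong to the indicated decision regions: (0,0) ∈ Φ_{B_r}, (0,1) ∈ Φ_{B_2}, (1,0) ∈ Φ_{B_1}, and (1,1) ∈ Φ_{B_b}; that is, V(0,0) = V_{B_r}(0,0), V(0,1) = V_{B_2}(0,1), V(1,0) = V_{B_1}(1,0), and V(1,1) = V_{B_b}(1,1). -/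
open Set

noncomputable section

/-- Decision region of action `a`: beliefs where action `a` achieves the value. -/
def Phi (l0 l1 β Rl Rh Cl Ch : ℝ) (V : ℝ → ℝ → ℝ) (a : PAct) : Set (ℝ × ℝ) :=
  {p : ℝ × ℝ | p.1 ∈ Icc (0:ℝ) 1 ∧ p.2 ∈ Icc (0:ℝ) 1 ∧
    V p.1 p.2 = Q l0 l1 β Rl Rh Cl Ch V a p.1 p.2}

/-! At a corner of the belief space the next belief does not depend on the action: a belief
of `0` or `1` is certain, and an unobserved channel at belief `0` or `1` moves to `λ0` or `λ1`,
exactly as an observed one does. So the four action values at a corner share their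
continuation term, and the optimal action is the one with the largest immediate reward. -/

section

variable {l0 l1 β Rl Rh Cl Ch : ℝ} {W V : ℝ → ℝ → ℝ}

lemma Bop_eq_Q_of_forall_le {p1 p2 : ℝ} {a : PAct}
    (h : ∀ b, Q l0 l1 β Rl Rh Cl Ch W b p1 p2 ≤ Q l0 l1 β Rl Rh Cl Ch W a p1 p2) :
    Bop l0 l1 β Rl Rh Cl Ch W p1 p2 = Q l0 l1 β Rl Rh Cl Ch W a p1 p2 := by
  refine le_antisymm (max_le (max_le (h _) (h _)) (max_le (h _) (h _))) ?_
  cases a <;> simp only [Bop, le_max_iff, le_refl, true_or, or_true]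

lemma mem_Phi_of_forall_le (hVfix : IsFix l0 l1 β Rl Rh Cl Ch V) {p1 p2 : ℝ}
    (hp1 : p1 ∈ Icc (0:ℝ) 1) (hp2 : p2 ∈ Icc (0:ℝ) 1) {a : PAct}
    (h : ∀ b, Q l0 l1 β Rl Rh Cl Ch V b p1 p2 ≤ Q l0 l1 β Rl Rh Cl Ch V a p1 p2) :
    (p1, p2) ∈ Phi l0 l1 β Rl Rh Cl Ch V a :=
  ⟨hp1, hp2, (hVfix p1 hp1 p2 hp2).trans (Bop_eq_Q_of_forall_le h)⟩

lemma Q_le_Q_Br_zero_zero (hCl : 0 < Cl) (hCh : 0 < Ch) (b : PAct) :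
    Q l0 l1 β Rl Rh Cl Ch W b 0 0 ≤ Q l0 l1 β Rl Rh Cl Ch W PAct.Br 0 0 := by
  cases b <;> norm_num [Q, Tr] <;> linarith

lemma Q_le_Q_B2_zero_one (hCl : 0 < Cl) (hCh : 0 < Ch) (hRl : 0 < Rl) (hRlh : Rl < Rh)
    (b : PAct) :
    Q l0 l1 β Rl Rh Cl Ch W b 0 1 ≤ Q l0 l1 β Rl Rh Cl Ch W PAct.B2 0 1 := by
  cases b <;> norm_num [Q, Tr] <;> linarith

lemma Q_le_Q_B1_one_zero (hCl : 0 < Cl) (hCh : 0 < Ch) (hRl : 0 < Rl) (hRlh : Rl < Rh)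
    (b : PAct) :
    Q l0 l1 β Rl Rh Cl Ch W b 1 0 ≤ Q l0 l1 β Rl Rh Cl Ch W PAct.B1 1 0 := by
  cases b <;> norm_num [Q, Tr] <;> linarith

lemma Q_le_Q_Bb_one_one (hRl : 0 < Rl) (hRh2 : Rh < 2 * Rl) (b : PAct) :
    Q l0 l1 β Rl Rh Cl Ch W b 1 1 ≤ Q l0 l1 β Rl Rh Cl Ch W PAct.Bb 1 1 := by
  cases b <;> norm_num [Q, Tr] <;> linarith

end

theorem corners_in_regions_general
    (l0 l1 β Rl Rh Cl Ch : ℝ)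
    (hRl : 0 < Rl) (hCl : 0 < Cl) (hCh : 0 < Ch)
    (hRlh : Rl < Rh) (hRh2 : Rh < 2 * Rl)
    (V : ℝ → ℝ → ℝ)
    (hVfix : IsFix l0 l1 β Rl Rh Cl Ch V) :
    ((0:ℝ), (0:ℝ)) ∈ Phi l0 l1 β Rl Rh Cl Ch V PAct.Br ∧
    ((0:ℝ), (1:ℝ)) ∈ Phi l0 l1 β Rl Rh Cl Ch V PAct.B2 ∧
    ((1:ℝ), (0:ℝ)) ∈ Phi l0 l1 β Rl Rh Cl Ch V PAct.B1 ∧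
    ((1:ℝ), (1:ℝ)) ∈ Phi l0 l1 β Rl Rh Cl Ch V PAct.Bb := by
  have h0 : (0:ℝ) ∈ Icc (0:ℝ) 1 := left_mem_Icc.mpr zero_le_one
  have h1 : (1:ℝ) ∈ Icc (0:ℝ) 1 := right_mem_Icc.mpr zero_le_one
  exact ⟨mem_Phi_of_forall_le hVfix h0 h0 (Q_le_Q_Br_zero_zero hCl hCh),
    mem_Phi_of_forall_le hVfix h0 h1 (Q_le_Q_B2_zero_one hCl hCh hRl hRlh),
    mem_Phi_of_forall_le hVfix h1 h0 (Q_le_Q_B1_one_zero hCl hCh hRl hRlh),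
    mem_Phi_of_forall_le hVfix h1 h1 (Q_le_Q_Bb_one_one hRl hRh2)⟩

/-- The four corners of the belief space belong to the indicated decision regions. -/
theorem corners_in_regions
    (l0 l1 β Rl Rh Cl Ch : ℝ)
    (hl0 : l0 ∈ Icc (0:ℝ) 1) (hl1 : l1 ∈ Icc (0:ℝ) 1) (hl01 : l0 < l1)
    (hβ0 : 0 ≤ β) (hβ1 : β < 1)
    (hRl : 0 < Rl) (hRh : 0 < Rh) (hCl : 0 < Cl) (hCh : 0 < Ch)
    (hRlh : Rl < Rh) (hRh2 : Rh < 2 * Rl)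
    (hClh : Cl < Ch) (hCh2 : Ch < 2 * Cl)
    (hRhCh : Ch < Rh) (hRlCl : Cl < Rl)
    (V : ℝ → ℝ → ℝ) (hVbdd : BddOnSq V)
    (hVfix : IsFix l0 l1 β Rl Rh Cl Ch V) :
    ((0:ℝ), (0:ℝ)) ∈ Phi l0 l1 β Rl Rh Cl Ch V PAct.Br ∧
    ((0:ℝ), (1:ℝ)) ∈ Phi l0 l1 β Rl Rh Cl Ch V PAct.B2 ∧
    ((1:ℝ), (0:ℝ)) ∈ Phi l0 l1 β Rl Rh Cl Ch V PAct.B1 ∧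
    ((1:ℝ), (1:ℝ)) ∈ Phi l0 l1 β Rl Rh Cl Ch V PAct.Bb :=
  corners_in_regions_general l0 l1 β Rl Rh Cl Ch hRl hCl hCh hRlh hRh2 V hVfix
end
end
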